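/- Let P be a two-orbit n-polytope in class 2_I with I ⊂ N = {0,...,n-1}. Then P is fully-transitive (Γ(P) is transitive on faces of every rank 0,...,n-1) if and only if |N \ I| > 1. -/
import Mathlib


/-- An abstract polytope of rank `n`, presented by a partially ordered type of faces
with a strictly monotone rank function onto `{-1, 0, ..., n}`, such that every flag
(maximal chain) has exactly one face of each rank (`faceAt`), every flag has a unique
`i`-adjacent flag for each `i = 0, ..., n-1` (the diamond condition, via `adj`), and
which is strongly flag-connected. -/
structure AbstractPolytope (n : ℕ) (Face : Type*) [PartialOrder Face] where
  rank : Face → ℤ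
  rank_strictMono : ∀ {F G : Face}, F < G → rank F < rank G
  rank_le : ∀ F : Face, -1 ≤ rank F ∧ rank F ≤ (n : ℤ)
  /-- the unique face of rank `i` in the flag `Φ`, for `-1 ≤ i ≤ n` -/
  faceAt : Flag Face → ℤ → Face
  faceAt_mem : ∀ (Φ : Flag Face) (i : ℤ), -1 ≤ i → i ≤ (n : ℤ) → faceAt Φ i ∈ Φ
  faceAt_rank : ∀ (Φ : Flag Face) (i : ℤ), -1 ≤ i → i ≤ (n : ℤ) → rank (faceAt Φ i) = i
  faceAt_eq : ∀ (Φ : Flag Face) (F : Face), F ∈ Φ → faceAt Φ (rank F) = F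
  /-- the unique `i`-adjacent flag of `Φ`, for `0 ≤ i ≤ n-1` -/
  adj : Flag Face → ℕ → Flag Face
  adj_ne : ∀ (Φ : Flag Face) (i : ℕ), i < n → adj Φ i ≠ Φ
  adj_mem : ∀ (Φ : Flag Face) (i : ℕ), i < n →
    ∀ F ∈ Φ, rank F ≠ (i : ℤ) → F ∈ adj Φ i
  adj_unique : ∀ (Φ Ψ : Flag Face) (i : ℕ), i < n → Ψ ≠ Φ →
    (∀ F ∈ Φ, rank F ≠ (i : ℤ) → F ∈ Ψ) → Ψ = adj Φ i
  /-- strong flag-connectedness: any two flags are joined by a sequence of successively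
  adjacent flags, with all adjacencies at ranks not occurring among their common faces -/
  connected : ∀ Φ Ψ : Flag Face, ∃ (l : ℕ) (c : ℕ → Flag Face), c 0 = Φ ∧ c l = Ψ ∧
    ∀ m < l, ∃ i : ℕ, i < n ∧ c (m + 1) = adj (c m) i ∧
      ∀ F : Face, F ∈ Φ → F ∈ Ψ → rank F ≠ (i : ℤ)

namespace AbstractPolytope

variable {n : ℕ} {Face : Type*} [PartialOrder Face]

/-- The automorphism group `Γ(P)`: order automorphisms of the set of faces.
It acts on flags via `Flag.map`; `g • Φ` denotes the image flag. -/
instance : MulAction (Face ≃o Face) (Flag Face) where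
  smul g Φ := Flag.map g Φ
  one_smul Φ := by
    show Flag.map 1 Φ = Φ
    ext x
    simp [Flag.map, Flag.ofIsMaxChain]
  mul_smul g h Φ := by
    show Flag.map (g * h) Φ = Flag.map g (Flag.map h Φ)
    ext x
    simp [Flag.map, Flag.ofIsMaxChain, Set.image_image]

lemma smul_flag_def (g : Face ≃o Face) (Φ : Flag Face) : g • Φ = Flag.map g Φ := rfl

/-- Two flags lie in the same orbit under the automorphism group. -/
def SameOrbit (Φ Ψ : Flag Face) : Prop := ∃ g : Face ≃o Face, g • Φ = Ψ

/-- The polytope has exactly two orbits on flags. -/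
def TwoOrbit (_A : AbstractPolytope n Face) : Prop :=
  ∃ Φ Ψ : Flag Face, ¬ SameOrbit Φ Ψ ∧ ∀ X : Flag Face, SameOrbit X Φ ∨ SameOrbit X Ψ

/-- `I` is the class type set of the two-orbit polytope `A`: it consists precisely of
those ranks `i ∈ {0,...,n-1}` such that every flag and its `i`-adjacent flag lie in the
same orbit; that is, `A` is in the class `2_I`. -/
def InClass (A : AbstractPolytope n Face) (I : Set ℕ) : Prop :=
  (∀ i ∈ I, i < n) ∧ ∀ i : ℕ, i < n → (i ∈ I ↔ ∀ Φ : Flag Face, SameOrbit Φ (A.adj Φ i))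

/-- The stabilizer in the automorphism group of a face `F`. -/
def faceStab (_A : AbstractPolytope n Face) (F : Face) : Subgroup (Face ≃o Face) where
  carrier := {g : Face ≃o Face | g F = F}
  one_mem' := rfl
  mul_mem' := by
    intro a b ha hb
    show (a * b) F = F
    rw [RelIso.mul_apply]
    rw [show b F = F from hb, show a F = F from ha]
  inv_mem' := by
    intro a ha
    show a⁻¹ F = F
    conv_lhs => rw [← show a F = F from ha]
    exact a.symm_apply_apply F

lemma mem_faceStab {A : AbstractPolytope n Face} {F : Face} {g : Face ≃o Face} :
    g ∈ A.faceStab F ↔ g F = F := Iff.rfl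

end AbstractPolytope

namespace AbstractPolytope

section Aux

variable {n : ℕ} {Face : Type*} [PartialOrder Face] (A : AbstractPolytope n Face)

lemma mem_smul_iff {g : Face ≃o Face} {Φ : Flag Face} {F : Face} :
    F ∈ g • Φ ↔ ∃ F' ∈ Φ, g F' = F := by
  rw [smul_flag_def, ← SetLike.mem_coe, Flag.coe_map]
  constructor
  · rintro ⟨F', hF', rfl⟩; exact ⟨F', hF', rfl⟩
  · rintro ⟨F', hF', rfl⟩; exact ⟨F', hF', rfl⟩

lemma mem_smul {g : Face ≃o Face} {Φ : Flag Face} {F : Face} (h : F ∈ Φ) :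
    g F ∈ g • Φ := mem_smul_iff.2 ⟨F, h, rfl⟩

lemma exists_flag (F : Face) : ∃ Φ : Flag Face, F ∈ Φ := by
  obtain ⟨M, hM, hsub⟩ :=
    (Set.subsingleton_singleton (a := F)).isChain (r := (· ≤ ·)) |>.exists_maxChain
  exact ⟨Flag.ofIsMaxChain M hM, hsub rfl⟩

lemma lt_of_rank_lt {Φ : Flag Face} {F G : Face} (hF : F ∈ Φ) (hG : G ∈ Φ)
    (h : A.rank F < A.rank G) : F < G := by
  rcases Φ.le_or_le hF hG with hle | hle
  · exact hle.lt_of_ne (fun e => by subst e; exact lt_irrefl _ h)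
  · rcases hle.eq_or_lt with e | hlt
    · subst e; exact absurd h (lt_irrefl _)
    · exact absurd (A.rank_strictMono hlt) (by omega)

lemma eq_of_mem_rank_eq {Φ : Flag Face} {F G : Face} (hF : F ∈ Φ) (hG : G ∈ Φ)
    (h : A.rank F = A.rank G) : F = G := by
  have h1 := A.faceAt_eq Φ F hF
  rw [h, A.faceAt_eq Φ G hG] at h1
  exact h1.symm

lemma rank_smul (g : Face ≃o Face) (F : Face) : A.rank (g F) = A.rank F := by
  obtain ⟨Φ, hF⟩ := exists_flag F
  set f : ℤ → ℤ := fun k => A.rank (g (A.faceAt Φ k)) with hf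
  have hstep : ∀ k : ℤ, -1 ≤ k → k + 1 ≤ (n : ℤ) → f k < f (k + 1) := by
    intro k h1 h2
    have hlt : A.faceAt Φ k < A.faceAt Φ (k + 1) :=
      A.lt_of_rank_lt (A.faceAt_mem Φ k h1 (by omega)) (A.faceAt_mem Φ (k + 1) (by omega) h2)
        (by rw [A.faceAt_rank Φ k h1 (by omega), A.faceAt_rank Φ (k + 1) (by omega) h2]; omega)
    exact A.rank_strictMono (g.strictMono hlt)
  have hbound : ∀ k : ℤ, -1 ≤ f k ∧ f k ≤ (n : ℤ) := fun k => A.rank_le _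
  have hmono : ∀ m : ℕ, ∀ k : ℤ, -1 ≤ k → k + (m : ℤ) ≤ (n : ℤ) → f k + m ≤ f (k + m) := by
    intro m
    induction m with
    | zero => intro k _ _; simp
    | succ m ih =>
      intro k h1 h2
      have h2' : k + (m : ℤ) ≤ (n : ℤ) := by push_cast at h2 ⊢; omega
      have hih := ih k h1 h2'
      have hs := hstep (k + (m : ℤ)) (by omega) (by push_cast at h2 ⊢; omega)
      push_cast
      have e : k + ((m : ℤ) + 1) = (k + (m : ℤ)) + 1 := by ring
      rw [e]
      omega
  have key : ∀ k : ℤ, -1 ≤ k → k ≤ (n : ℤ) → f k = k := by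
    intro k h1 h2
    have lb := hmono (k + 1).toNat (-1) le_rfl (by omega)
    have ub := hmono ((n : ℤ) - k).toNat k h1 (by omega)
    have e1 : (-1 : ℤ) + ((k + 1).toNat : ℤ) = k := by omega
    have e2 : k + (((n : ℤ) - k).toNat : ℤ) = (n : ℤ) := by omega
    rw [e1] at lb
    rw [e2] at ub
    have b1 := hbound (-1)
    have b2 := hbound (n : ℤ)
    omega
  have hFr := A.rank_le F
  have h3 := key (A.rank F) hFr.1 hFr.2
  rw [hf] at h3
  simp only [A.faceAt_eq Φ F hF] at h3
  exact h3

lemma smul_faceAt (g : Face ≃o Face) (Φ : Flag Face) {k : ℤ} (h1 : -1 ≤ k) (h2 : k ≤ (n : ℤ)) :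
    A.faceAt (g • Φ) k = g (A.faceAt Φ k) := by
  have hm : g (A.faceAt Φ k) ∈ g • Φ := mem_smul (A.faceAt_mem Φ k h1 h2)
  have hr : A.rank (g (A.faceAt Φ k)) = k := by rw [A.rank_smul, A.faceAt_rank Φ k h1 h2]
  have h := A.faceAt_eq (g • Φ) _ hm
  rwa [hr] at h

lemma smul_adj (g : Face ≃o Face) (Φ : Flag Face) {i : ℕ} (hi : i < n) :
    g • A.adj Φ i = A.adj (g • Φ) i := by
  apply A.adj_unique (g • Φ) (g • A.adj Φ i) i hi
  · intro h
    exact A.adj_ne Φ i hi (MulAction.injective g h)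
  · intro F hF hr
    obtain ⟨F', hF', rfl⟩ := mem_smul_iff.1 hF
    have hr' : A.rank F' ≠ (i : ℤ) := by rwa [A.rank_smul] at hr
    exact mem_smul (A.adj_mem Φ i hi F' hF' hr')

lemma adj_adj (Φ : Flag Face) {i : ℕ} (hi : i < n) : A.adj (A.adj Φ i) i = Φ := by
  symm
  apply A.adj_unique (A.adj Φ i) Φ i hi (Ne.symm (A.adj_ne Φ i hi))
  intro F hF hr
  have hb := A.rank_le F
  have h1 : A.faceAt Φ (A.rank F) ∈ A.adj Φ i :=
    A.adj_mem Φ i hi _ (A.faceAt_mem Φ _ hb.1 hb.2)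
      (by rw [A.faceAt_rank Φ _ hb.1 hb.2]; exact hr)
  have e2 : F = A.faceAt Φ (A.rank F) :=
    A.eq_of_mem_rank_eq hF h1 (by rw [A.faceAt_rank Φ _ hb.1 hb.2])
  rw [e2]
  exact A.faceAt_mem Φ _ hb.1 hb.2

lemma sameOrbit_refl (Φ : Flag Face) : SameOrbit Φ Φ := ⟨1, one_smul _ _⟩

lemma sameOrbit_symm {Φ Ψ : Flag Face} (h : SameOrbit Φ Ψ) : SameOrbit Ψ Φ := by
  obtain ⟨g, rfl⟩ := h
  exact ⟨g⁻¹, inv_smul_smul g Φ⟩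

lemma sameOrbit_trans {Φ Ψ X : Flag Face} (h1 : SameOrbit Φ Ψ) (h2 : SameOrbit Ψ X) :
    SameOrbit Φ X := by
  obtain ⟨g, rfl⟩ := h1
  obtain ⟨h, rfl⟩ := h2
  exact ⟨h * g, mul_smul h g Φ⟩

lemma third_orbit (h2 : A.TwoOrbit) {X Y Z : Flag Face} (hXY : ¬ SameOrbit X Y)
    (hXZ : ¬ SameOrbit X Z) : SameOrbit Y Z := by
  obtain ⟨Φ₀, Ψ₀, h01, hall⟩ := h2
  rcases hall X with hx | hx <;> rcases hall Y with hy | hy <;> rcases hall Z with hz | hz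
  · exact absurd (sameOrbit_trans hx (sameOrbit_symm hy)) hXY
  · exact absurd (sameOrbit_trans hx (sameOrbit_symm hy)) hXY
  · exact absurd (sameOrbit_trans hx (sameOrbit_symm hz)) hXZ
  · exact sameOrbit_trans hy (sameOrbit_symm hz)
  · exact sameOrbit_trans hy (sameOrbit_symm hz)
  · exact absurd (sameOrbit_trans hx (sameOrbit_symm hz)) hXZ
  · exact absurd (sameOrbit_trans hx (sameOrbit_symm hy)) hXY
  · exact absurd (sameOrbit_trans hx (sameOrbit_symm hy)) hXY

lemma mem_class_of_exists {I : Set ℕ} (hI : A.InClass I) (h2 : A.TwoOrbit) {i : ℕ}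
    (hi : i < n) (hex : ∃ Ψ : Flag Face, SameOrbit Ψ (A.adj Ψ i)) : i ∈ I := by
  obtain ⟨Ψ, g0, hg0⟩ := hex
  rw [hI.2 i hi]
  intro Φ'
  by_cases hc : SameOrbit Ψ Φ'
  · obtain ⟨g, rfl⟩ := hc
    rw [← A.smul_adj g Ψ hi]
    exact ⟨g * g0 * g⁻¹, by rw [mul_smul, mul_smul, inv_smul_smul, hg0]⟩
  · by_contra hno
    have h3 : SameOrbit Ψ (A.adj Φ' i) :=
      A.third_orbit h2 (X := Φ') (fun h => hc (sameOrbit_symm h)) hno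
    obtain ⟨g, hg⟩ := h3
    have h4 : g • A.adj Ψ i = A.adj (g • Ψ) i := A.smul_adj g Ψ hi
    rw [hg, A.adj_adj Φ' hi] at h4
    exact hc (sameOrbit_trans ⟨g0, hg0⟩ ⟨g, h4⟩)

lemma not_sameOrbit_adj {I : Set ℕ} (hI : A.InClass I) (h2 : A.TwoOrbit) {i : ℕ}
    (hi : i < n) (hiI : i ∉ I) (Φ : Flag Face) : ¬ SameOrbit Φ (A.adj Φ i) :=
  fun h => hiI (A.mem_class_of_exists hI h2 hi ⟨Φ, h⟩)

lemma exists_not_mem {I : Set ℕ} (hI : A.InClass I) (h2 : A.TwoOrbit) :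
    ∃ j, j < n ∧ j ∉ I := by
  by_contra h
  push_neg at h
  obtain ⟨Φ, Ψ, hne, _⟩ := h2
  apply hne
  obtain ⟨l, c, hc0, hcl, hstep⟩ := A.connected Φ Ψ
  have hall : ∀ m, m ≤ l → SameOrbit (c 0) (c m) := by
    intro m
    induction m with
    | zero => intro _; exact sameOrbit_refl _
    | succ m ih =>
      intro hm
      obtain ⟨i, hi, he, _⟩ := hstep m (by omega)
      have hs : SameOrbit (c m) (c (m + 1)) := by
        rw [he]
        exact (hI.2 i hi).1 (h i hi) (c m)
      exact sameOrbit_trans (ih (by omega)) hs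
  have := hall l le_rfl
  rwa [hc0, hcl] at this

lemma sameOrbit_of_common {I : Set ℕ} (hI : A.InClass I) {j : ℕ}
    (hj : ∀ k, k < n → k ∉ I → k = j) {Λ₁ Λ₂ : Flag Face} {F : Face}
    (hF1 : F ∈ Λ₁) (hF2 : F ∈ Λ₂) (hrF : A.rank F = (j : ℤ)) : SameOrbit Λ₁ Λ₂ := by
  obtain ⟨l, c, hc0, hcl, hstep⟩ := A.connected Λ₁ Λ₂
  have hall : ∀ m, m ≤ l → SameOrbit (c 0) (c m) := by
    intro m
    induction m with
    | zero => intro _; exact sameOrbit_refl _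
    | succ m ih =>
      intro hm
      obtain ⟨i, hi, he, hcom⟩ := hstep m (by omega)
      have hne : i ≠ j := by
        have := hcom F hF1 hF2
        rw [hrF] at this
        omega
      have hiI : i ∈ I := by
        by_contra h'
        exact hne (hj i hi h')
      have hs : SameOrbit (c m) (c (m + 1)) := by
        rw [he]
        exact (hI.2 i hi).1 hiI (c m)
      exact sameOrbit_trans (ih (by omega)) hs
  have := hall l le_rfl
  rwa [hc0, hcl] at this

end Aux

end AbstractPolytope

open AbstractPolytope in
/-- A two-orbit polytope in class `2_I` is fully transitive (transitive on
the faces of each rank `0,...,n-1`) if and only if `|N \ I| > 1`. -/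
theorem stmt4 {n : ℕ} {Face : Type*} [PartialOrder Face] (A : AbstractPolytope n Face)
    (I : Set ℕ) (h2 : A.TwoOrbit) (hI : A.InClass I) :
    (∀ i : ℕ, i < n → ∀ F G : Face, A.rank F = (i : ℤ) → A.rank G = (i : ℤ) →
        ∃ g : Face ≃o Face, g F = G)
    ↔ 1 < Set.ncard {i : ℕ | i < n ∧ i ∉ I} := by
  have hfin : {i : ℕ | i < n ∧ i ∉ I}.Finite :=
    (Set.finite_Iio n).subset (fun x hx => hx.1)
  constructor
  · intro htrans
    rw [Set.one_lt_ncard_iff hfin]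
    by_contra hcon
    push_neg at hcon
    obtain ⟨j, hjn, hjI⟩ := A.exists_not_mem hI h2
    have hj : ∀ k, k < n → k ∉ I → k = j := fun k h1 h2' => hcon k j ⟨h1, h2'⟩ ⟨hjn, hjI⟩
    obtain ⟨Φ, -, -⟩ := id h2
    have hm1 : (-1 : ℤ) ≤ (j : ℤ) := by omega
    have hm2 : (j : ℤ) ≤ (n : ℤ) := by omega
    have hFm : A.faceAt Φ (j : ℤ) ∈ Φ := A.faceAt_mem Φ _ hm1 hm2
    have hGm : A.faceAt (A.adj Φ j) (j : ℤ) ∈ A.adj Φ j := A.faceAt_mem _ _ hm1 hm2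
    have hrF : A.rank (A.faceAt Φ (j : ℤ)) = (j : ℤ) := A.faceAt_rank Φ _ hm1 hm2
    have hrG : A.rank (A.faceAt (A.adj Φ j) (j : ℤ)) = (j : ℤ) := A.faceAt_rank _ _ hm1 hm2
    obtain ⟨g, hg⟩ := htrans j hjn _ _ hrF hrG
    have h1 : g (A.faceAt Φ (j : ℤ)) ∈ g • Φ := mem_smul hFm
    rw [hg] at h1
    have hsame : SameOrbit (g • Φ) (A.adj Φ j) := A.sameOrbit_of_common hI hj h1 hGm hrG
    exact A.not_sameOrbit_adj hI h2 hjn hjI Φ (sameOrbit_trans ⟨g, rfl⟩ hsame)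
  · intro hcard i hi F G hF hG
    rw [Set.one_lt_ncard_iff hfin] at hcard
    obtain ⟨j, k, hjS, hkS, hjk⟩ := hcard
    obtain ⟨Φ, hFΦ⟩ := exists_flag F
    obtain ⟨Ψ, hGΨ⟩ := exists_flag G
    by_cases hc : SameOrbit Φ Ψ
    · obtain ⟨g, hg⟩ := hc
      refine ⟨g, ?_⟩
      have h1 : g F ∈ Ψ := by rw [← hg]; exact mem_smul hFΦ
      exact A.eq_of_mem_rank_eq h1 hGΨ (by rw [A.rank_smul, hF, hG])
    · have hm : ∃ m, m < n ∧ m ∉ I ∧ m ≠ i := by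
        by_cases h : j = i
        · exact ⟨k, hkS.1, hkS.2, fun e => hjk (h.trans e.symm)⟩
        · exact ⟨j, hjS.1, hjS.2, h⟩
      obtain ⟨m, hmn, hmI, hmi⟩ := hm
      have hGΨ' : G ∈ A.adj Ψ m := A.adj_mem Ψ m hmn G hGΨ (by rw [hG]; omega)
      have hno : ¬ SameOrbit Ψ (A.adj Ψ m) := A.not_sameOrbit_adj hI h2 hmn hmI Ψ
      have hsame : SameOrbit Φ (A.adj Ψ m) :=
        A.third_orbit h2 (X := Ψ) (fun h => hc (sameOrbit_symm h)) hno
      obtain ⟨g, hg⟩ := hsame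
      refine ⟨g, ?_⟩
      have h1 : g F ∈ A.adj Ψ m := by rw [← hg]; exact mem_smul hFΦ
      exact A.eq_of_mem_rank_eq h1 hGΨ' (by rw [A.rank_smul, hF, hG])
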